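/- Let (A,B,R,σ) be a normalized context whose concept lattice M satisfies the ascending chain condition, and let {(A_λ,B_λ)}_{λ∈Λ} be a decomposition of (A,B,R,σ) into independent subcontexts. Then for every λ∈Λ, the set K_λ = {⟨g,f⟩∈M : ⟨g,f⟩ = ⋀ M_g^{A_λ}} ∪ {⟨g_⊤,f_⊥⟩, ⟨g_⊥,f_⊤⟩} is a complete block of the bounded lattice M. -/

import Mathlib

/-- A multi-adjoint frame together with a formal context `(A, B, R, σ)`.
`conj i`, `limp i`, `rimp i` form an adjoint triple on the complete lattice `L` for each
index `i : I`, and each conjunctor satisfies the boundary condition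
`x & ⊤ = ⊤ & x = x`. -/
structure FCAContext (L : Type*) [CompleteLattice L] (I A B : Type*) where
  conj : I → L → L → L
  limp : I → L → L → L
  rimp : I → L → L → L
  R : A → B → L
  sig : A → B → I
  adjoint_left : ∀ i x y z, x ≤ limp i z y ↔ conj i x y ≤ z
  adjoint_right : ∀ i x y z, conj i x y ≤ z ↔ y ≤ rimp i z x
  boundary_left : ∀ i x, conj i ⊤ x = x
  boundary_right : ∀ i x, conj i x ⊤ = x

namespace FCAContext

variable {L I A B : Type*} [CompleteLattice L]

open Classical in
/-- The fuzzy-attribute `φ_{a,x}`. -/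
noncomputable def phiA (a : A) (x : L) : A → L :=
  fun a' => if a' = a then x else ⊥

open Classical in
/-- The fuzzy-object `φ_{b,y}`. -/
noncomputable def phiB (b : B) (y : L) : B → L :=
  fun b' => if b' = b then y else ⊥

/-- The pair `⟨g_⊤, f_⊥⟩` (the top of the concept lattice of a normalized context). -/
def topC : (B → L) × (A → L) := (fun _ => (⊤ : L), fun _ => (⊥ : L))

/-- The pair `⟨g_⊥, f_⊤⟩` (the bottom of the concept lattice of a normalized context). -/
def botC : (B → L) × (A → L) := (fun _ => (⊥ : L), fun _ => (⊤ : L))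

/-- The order on concepts: `⟨g₁,f₁⟩ ⪯ ⟨g₂,f₂⟩ iff g₁ ≤ g₂` pointwise. -/
def cle (c d : (B → L) × (A → L)) : Prop := c.1 ≤ d.1

variable (C : FCAContext L I A B)

/-- The derivation operator `↑` on fuzzy sets of objects:
`g↑(a) = ⨅_b R(a,b) ↙^{σ(a,b)} g(b)`. -/
def up (g : B → L) : A → L := fun a => ⨅ b, C.limp (C.sig a b) (C.R a b) (g b)

/-- The derivation operator `↓` on fuzzy sets of attributes:
`f↓(b) = ⨅_a R(a,b) ↖_{σ(a,b)} f(a)`. -/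
def down (f : A → L) : B → L := fun b => ⨅ a, C.rimp (C.sig a b) (C.R a b) (f a)

/-- The concept lattice `M`: pairs `⟨g, f⟩` with `g↑ = f` and `f↓ = g`. -/
def concepts : Set ((B → L) × (A → L)) :=
  {c | C.up c.1 = c.2 ∧ C.down c.2 = c.1}

/-- The pair `⟨φ_{a,x}↓, φ_{a,x}↓↑⟩` generated by a fuzzy-attribute. -/
noncomputable def attrConcept (a : A) (x : L) : (B → L) × (A → L) :=
  (C.down (phiA a x), C.up (C.down (phiA a x)))

/-- The pair `⟨φ_{b,y}↑↓, φ_{b,y}↑⟩` generated by a fuzzy-object. -/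
noncomputable def objConcept (b : B) (y : L) : (B → L) × (A → L) :=
  (C.down (C.up (phiB b y)), C.up (phiB b y))

/-- A context is *normalized* when every attribute is related to some object with a
non-bottom value and to some object with the bottom value, and symmetrically for
objects. -/
def Normalized : Prop :=
  (∀ a : A, ∃ b : B, C.R a b ≠ ⊥) ∧ (∀ a : A, ∃ b : B, C.R a b = ⊥) ∧
  (∀ b : B, ∃ a : A, C.R a b ≠ ⊥) ∧ (∀ b : B, ∃ a : A, C.R a b = ⊥)

/-- The conjunctor associated with the index `i` has no zero-divisors. -/
def NoZeroDiv (i : I) : Prop :=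
  ∀ x y : L, x ≠ ⊥ → y ≠ ⊥ → C.conj i x y ≠ ⊥

/-- `(Y, X)` is a *separable subcontext* of the context. -/
def SeparableSubcontext (Y : Set A) (X : Set B) : Prop :=
  Y.Nonempty ∧ X.Nonempty ∧ Y ≠ Set.univ ∧ X ≠ Set.univ ∧
  (∃ a ∈ Y, ∃ b ∈ X, C.R a b ≠ ⊥) ∧
  (∀ a ∈ Y, ∀ b ∉ X, C.R a b = ⊥) ∧
  (∀ a ∉ Y, ∀ b ∈ X, C.R a b = ⊥)

/-- A family `{(Afam l, Bfam l)}_{l : Λ}` is a *decomposition into independent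
subcontexts* of the context. -/
def SubcontextDecomposition {Λ : Type*} (Afam : Λ → Set A) (Bfam : Λ → Set B) : Prop :=
  Nonempty Λ ∧
  (∀ l, C.SeparableSubcontext (Afam l) (Bfam l)) ∧
  (∀ l m, l ≠ m → Disjoint (Afam l) (Afam m)) ∧
  (∀ l m, l ≠ m → Disjoint (Bfam l) (Bfam m)) ∧
  (⋃ l, Afam l) = Set.univ ∧ (⋃ l, Bfam l) = Set.univ ∧
  (∀ l, ∀ a ∉ Afam l, ∀ b ∈ Bfam l, C.NoZeroDiv (C.sig a b)) ∧
  (∀ l, ∀ a ∈ Afam l, ∀ b ∉ Bfam l, C.NoZeroDiv (C.sig a b))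

/-- The meet of two concepts in the concept lattice: the extent is the pointwise
infimum of the extents. -/
def cmeet (c d : (B → L) × (A → L)) : (B → L) × (A → L) :=
  (c.1 ⊓ d.1, C.up (c.1 ⊓ d.1))

/-- The join of two concepts in the concept lattice: the intent is the pointwise
infimum of the intents. -/
def cjoin (c d : (B → L) × (A → L)) : (B → L) × (A → L) :=
  (C.down (c.2 ⊓ d.2), c.2 ⊓ d.2)

/-- A concept is *meet-irreducible* in the concept lattice `M` if it is not the top of
`M` (its extent is not `g_⊤`) and whenever it is the meet of two concepts it equals one
of them. -/
def MeetIrred (m : (B → L) × (A → L)) : Prop :=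
  m ∈ C.concepts ∧ m.1 ≠ (fun _ => (⊤ : L)) ∧
  ∀ c d, c ∈ C.concepts → d ∈ C.concepts → m.1 = c.1 ⊓ d.1 → m = c ∨ m = d

/-- `M_F^{A'}`: the meet-irreducible concepts generated by fuzzy-attributes with
attribute in `A'`. -/
noncomputable def MF (A' : Set A) : Set ((B → L) × (A → L)) :=
  {m | C.MeetIrred m ∧ ∃ a ∈ A', ∃ x : L, m = C.attrConcept a x}

/-- `M_g^{A'}`: the elements of `M_F^{A'}` above the concept with extent `g`. -/
noncomputable def Mg (g : B → L) (A' : Set A) : Set ((B → L) × (A → L)) :=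
  {m ∈ C.MF A' | g ≤ m.1}

/-- The concept lattice satisfies the ascending chain condition. -/
def ACC : Prop :=
  ∀ c : ℕ → (B → L) × (A → L), (∀ n, c n ∈ C.concepts) →
    (∀ n, cle (c n) (c (n + 1))) → ∃ n, ∀ m, n ≤ m → c m = c n

/-- `K` is a *block of concepts* of the concept lattice `M`: a sublattice of `M`,
different from `M`, containing some concept other than the top `⟨g_⊤,f_⊥⟩` and the
bottom `⟨g_⊥,f_⊤⟩`, and closed under comparability except for the top and the bottom. -/
def IsBlockM (K : Set ((B → L) × (A → L))) : Prop :=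
  K ⊆ C.concepts ∧ K ≠ C.concepts ∧
  (K \ ({topC, botC} : Set ((B → L) × (A → L)))).Nonempty ∧
  (∀ c ∈ K, ∀ d ∈ K, C.cmeet c d ∈ K ∧ C.cjoin c d ∈ K) ∧
  ∀ k ∈ K \ ({topC, botC} : Set ((B → L) × (A → L))), ∀ c ∈ C.concepts,
    (cle k c ∨ cle c k) →
    c ∉ ({topC, botC} : Set ((B → L) × (A → L))) → c ∈ K

/-- A complete block of concepts: a block containing the top and the bottom of `M`. -/
def IsCompleteBlockM (K : Set ((B → L) × (A → L))) : Prop :=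
  C.IsBlockM K ∧ topC ∈ K ∧ botC ∈ K

/-- A family `{K l}_{l : Λ}` is a *decomposition into independent blocks* of the
concept lattice `M`. -/
def BlockDecomposition {Λ : Type*} (K : Λ → Set ((B → L) × (A → L))) : Prop :=
  Nonempty Λ ∧ (∀ l, C.IsBlockM (K l)) ∧
  (∀ l m, l ≠ m → K l ∩ K m ⊆ ({topC, botC} : Set ((B → L) × (A → L)))) ∧
  (⋃ l, K l) = C.concepts

/-- The block of concepts `K_λ` determined by a set of attributes `A'`:
the concepts which are the infimum of `M_g^{A'}`, together with the top and the
bottom of `M`. -/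
noncomputable def Kblock (A' : Set A) : Set ((B → L) × (A → L)) :=
  {c ∈ C.concepts | c.1 = ⨅ m ∈ C.Mg c.1 A', m.1} ∪
    ({topC, botC} : Set ((B → L) × (A → L)))

/-- The set of attributes `A_μ` associated with a block of concepts `K`. -/
noncomputable def Amu (K : Set ((B → L) × (A → L))) : Set A :=
  {a | ∃ x : L, C.attrConcept a x ∈
    K \ ({topC, botC} : Set ((B → L) × (A → L)))}

/-- The set of objects `B_μ` associated with a block of concepts `K`. -/
noncomputable def Bmu (K : Set ((B → L) × (A → L))) : Set B :=
  {b | ∃ y : L, C.objConcept b y ∈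
    K \ ({topC, botC} : Set ((B → L) × (A → L)))}

end FCAContext


namespace FCAContext

section Aux

variable {L I A B : Type*} [CompleteLattice L] (C : FCAContext L I A B)

lemma conj_bot_left (i : I) (y : L) : C.conj i ⊥ y = ⊥ :=
  le_bot_iff.mp ((C.adjoint_left i ⊥ y ⊥).mp bot_le)

lemma conj_bot_right (i : I) (x : L) : C.conj i x ⊥ = ⊥ :=
  le_bot_iff.mp ((C.adjoint_right i x ⊥ ⊥).mpr bot_le)

lemma limp_bot (i : I) (z : L) : C.limp i z ⊥ = ⊤ :=
  top_unique ((C.adjoint_left i ⊤ ⊥ z).mpr (by rw [C.conj_bot_right]; exact bot_le))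

lemma rimp_bot (i : I) (z : L) : C.rimp i z ⊥ = ⊤ :=
  top_unique ((C.adjoint_right i ⊥ ⊤ z).mp (by rw [C.conj_bot_left]; exact bot_le))

lemma limp_top (i : I) (z : L) : C.limp i z ⊤ = z := by
  refine le_antisymm ?_ ((C.adjoint_left i z ⊤ z).mpr (by rw [C.boundary_right]))
  have := (C.adjoint_left i (C.limp i z ⊤) ⊤ z).mp le_rfl
  rwa [C.boundary_right] at this

lemma rimp_top (i : I) (z : L) : C.rimp i z ⊤ = z := by
  refine le_antisymm ?_ ((C.adjoint_right i ⊤ z z).mp (by rw [C.boundary_left]))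
  have := (C.adjoint_right i ⊤ (C.rimp i z ⊤) z).mpr le_rfl
  rwa [C.boundary_left] at this

lemma limp_bot_left {i : I} (h : C.NoZeroDiv i) {y : L} (hy : y ≠ ⊥) :
    C.limp i ⊥ y = ⊥ := by
  by_contra hne
  exact h _ _ hne hy (le_bot_iff.mp ((C.adjoint_left i (C.limp i ⊥ y) y ⊥).mp le_rfl))

lemma rimp_bot_left {i : I} (h : C.NoZeroDiv i) {x : L} (hx : x ≠ ⊥) :
    C.rimp i ⊥ x = ⊥ := by
  by_contra hne
  exact h _ _ hx hne (le_bot_iff.mp ((C.adjoint_right i x (C.rimp i ⊥ x) ⊥).mpr le_rfl))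

lemma galois (g : B → L) (f : A → L) : g ≤ C.down f ↔ f ≤ C.up g := by
  constructor
  · intro h a
    refine le_iInf fun b => (C.adjoint_left _ _ _ _).mpr ?_
    exact (C.adjoint_right _ _ _ _).mpr ((h b).trans (iInf_le _ a))
  · intro h b
    refine le_iInf fun a => (C.adjoint_right _ _ _ _).mp ?_
    exact (C.adjoint_left _ _ _ _).mp ((h a).trans (iInf_le _ b))

lemma le_down_up (g : B → L) : g ≤ C.down (C.up g) :=
  (C.galois g (C.up g)).mpr le_rfl

lemma le_up_down (f : A → L) : f ≤ C.up (C.down f) :=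
  (C.galois (C.down f) f).mp le_rfl

lemma up_antitone {g g' : B → L} (h : g ≤ g') : C.up g' ≤ C.up g :=
  (C.galois g (C.up g')).mp (h.trans (C.le_down_up g'))

lemma down_antitone {f f' : A → L} (h : f ≤ f') : C.down f' ≤ C.down f :=
  (C.galois (C.down f') f).mpr (h.trans (C.le_up_down f'))

lemma down_up_down (f : A → L) : C.down (C.up (C.down f)) = C.down f :=
  le_antisymm (C.down_antitone (C.le_up_down f)) (C.le_down_up _)

lemma up_down_up (g : B → L) : C.up (C.down (C.up g)) = C.up g :=
  le_antisymm (C.up_antitone (C.le_down_up g)) (C.le_up_down _)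

lemma down_sup (f f' : A → L) : C.down (f ⊔ f') = C.down f ⊓ C.down f' := by
  refine le_antisymm (le_inf (C.down_antitone le_sup_left) (C.down_antitone le_sup_right)) ?_
  refine (C.galois _ _).mpr (sup_le ?_ ?_)
  · exact (C.le_up_down f).trans (C.up_antitone inf_le_left)
  · exact (C.le_up_down f').trans (C.up_antitone inf_le_right)

lemma up_sup (g g' : B → L) : C.up (g ⊔ g') = C.up g ⊓ C.up g' := by
  refine le_antisymm (le_inf (C.up_antitone le_sup_left) (C.up_antitone le_sup_right)) ?_
  refine (C.galois _ _).mp (sup_le ?_ ?_)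
  · exact (C.le_down_up g).trans (C.down_antitone inf_le_left)
  · exact (C.le_down_up g').trans (C.down_antitone inf_le_right)

lemma concept_ext {c d : (B → L) × (A → L)} (hc : c ∈ C.concepts)
    (hd : d ∈ C.concepts) (h : c.1 = d.1) : c = d :=
  Prod.ext h (by rw [← hc.1, ← hd.1, h])

lemma attrConcept_mem (a : A) (x : L) : C.attrConcept a x ∈ C.concepts :=
  ⟨rfl, C.down_up_down _⟩

lemma attr_fst (a : A) (x : L) :
    (C.attrConcept a x).1 = fun b => C.rimp (C.sig a b) (C.R a b) x := by
  funext b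
  refine le_antisymm (iInf_le_of_le a (by simp [phiA])) (le_iInf fun a' => ?_)
  by_cases h : a' = a
  · subst h; simp [phiA]
  · simp [phiA, h, C.rimp_bot]

lemma up_bot_fun : C.up (fun _ => ⊥) = fun _ => ⊤ := by
  funext a; simp [up, C.limp_bot]

lemma down_bot_fun : C.down (fun _ => ⊥) = fun _ => ⊤ := by
  funext b; simp [down, C.rimp_bot]

lemma up_top_fun (hn : C.Normalized) : C.up (fun _ => ⊤) = fun _ => ⊥ := by
  funext a
  obtain ⟨b, hb⟩ := hn.2.1 a
  exact le_antisymm (iInf_le_of_le b (by rw [C.limp_top, hb])) bot_le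

lemma down_top_fun (hn : C.Normalized) : C.down (fun _ => ⊤) = fun _ => ⊥ := by
  funext b
  obtain ⟨a, ha⟩ := hn.2.2.2 b
  exact le_antisymm (iInf_le_of_le a (by rw [C.rimp_top, ha])) bot_le

lemma topC_mem (hn : C.Normalized) : (topC : (B → L) × (A → L)) ∈ C.concepts :=
  ⟨C.up_top_fun hn, C.down_bot_fun⟩

lemma botC_mem (hn : C.Normalized) : (botC : (B → L) × (A → L)) ∈ C.concepts :=
  ⟨C.up_bot_fun, C.down_top_fun hn⟩

lemma bot_ne_top [Nonempty A] (hn : C.Normalized) : (⊥ : L) ≠ ⊤ := by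
  intro h
  obtain ⟨b, hb⟩ := hn.1 (Classical.arbitrary A)
  exact hb (le_bot_iff.mp (h ▸ le_top))

lemma fst_eq_iInf_attr {c : (B → L) × (A → L)} (hc : c ∈ C.concepts) :
    c.1 = ⨅ a, (C.attrConcept a (c.2 a)).1 := by
  funext b
  rw [← hc.2]
  simp only [iInf_apply, C.attr_fst]
  rfl

lemma iInf_Mg_univ_le (hacc : C.ACC) {c : (B → L) × (A → L)} (hc : c ∈ C.concepts) :
    (⨅ m ∈ C.Mg c.1 Set.univ, m.1) ≤ c.1 := by
  have hwf : WellFounded ((· > ·) : {g : B → L // C.down (C.up g) = g} →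
      {g : B → L // C.down (C.up g) = g} → Prop) := by
    refine IsWellFounded.wf (self := wellFoundedGT_iff_monotone_chain_condition.mpr ?_)
    intro a
    obtain ⟨n, hn⟩ := hacc (fun n => ((a n).1, C.up (a n).1))
      (fun n => ⟨rfl, (a n).2⟩) (fun n => a.mono (Nat.le_succ n))
    exact ⟨n, fun m hm => Subtype.ext (congrArg Prod.fst (hn m hm)).symm⟩
  suffices h : ∀ g : {g : B → L // C.down (C.up g) = g},
      (⨅ m ∈ C.Mg g.1 Set.univ, m.1) ≤ g.1 by
    have hcl : C.down (C.up c.1) = c.1 := by rw [hc.1, hc.2]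
    exact h ⟨c.1, hcl⟩
  intro g
  induction g using WellFounded.induction hwf with
  | _ g IH =>
  by_cases htop : g.1 = fun _ => (⊤ : L)
  · rw [htop]; exact le_top
  have hcc : ((g.1, C.up g.1) : (B → L) × (A → L)) ∈ C.concepts := ⟨rfl, g.2⟩
  set c' : (B → L) × (A → L) := (g.1, C.up g.1) with hc'
  have hsub : ∀ {h : B → L}, g.1 ≤ h → ∀ m ∈ C.Mg h Set.univ, m ∈ C.Mg g.1 Set.univ :=
    fun {h} hle m hm => ⟨hm.1, hle.trans hm.2⟩
  by_cases hirr : C.MeetIrred c'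
  · by_cases hex : ∃ a, (C.attrConcept a (c'.2 a)).1 = g.1
    · obtain ⟨a, ha⟩ := hex
      have hm : C.attrConcept a (c'.2 a) ∈ C.Mg g.1 Set.univ := by
        refine ⟨⟨?_, a, Set.mem_univ a, c'.2 a, rfl⟩, ha.ge⟩
        have heq : c' = C.attrConcept a (c'.2 a) :=
          C.concept_ext hcc (C.attrConcept_mem _ _) ha.symm
        rwa [← heq]
      exact (iInf₂_le _ hm).trans ha.le
    · push_neg at hex
      have key : ∀ a : A, (⨅ m ∈ C.Mg g.1 Set.univ, m.1)
          ≤ (C.attrConcept a (c'.2 a)).1 := by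
        intro a
        have hle : g.1 ≤ (C.attrConcept a (c'.2 a)).1 := by
          conv_lhs => rw [show g.1 = c'.1 from rfl, C.fst_eq_iInf_attr hcc]
          exact iInf_le _ a
        have hclosed : C.down (C.up (C.attrConcept a (c'.2 a)).1)
            = (C.attrConcept a (c'.2 a)).1 := by
          have h := C.attrConcept_mem a (c'.2 a)
          rw [h.1, h.2]
        have hlt : g < (⟨(C.attrConcept a (c'.2 a)).1, hclosed⟩ :
            {g : B → L // C.down (C.up g) = g}) :=
          Subtype.mk_lt_mk.mpr (lt_of_le_of_ne hle (fun h => hex a h.symm))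
        refine le_trans ?_ (IH _ hlt)
        exact le_iInf₂ fun m hm => iInf₂_le m (hsub hle m hm)
      have h2 : (⨅ m ∈ C.Mg g.1 Set.univ, m.1) ≤ ⨅ a, (C.attrConcept a (c'.2 a)).1 :=
        le_iInf key
      rwa [← C.fst_eq_iInf_attr hcc] at h2
  · have h3 : ¬ ∀ d e, d ∈ C.concepts → e ∈ C.concepts → c'.1 = d.1 ⊓ e.1 →
        c' = d ∨ c' = e := fun h => hirr ⟨hcc, htop, h⟩
    push_neg at h3
    obtain ⟨d, e, hd, he, heq, hned, hnee⟩ := h3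
    have step : ∀ p : (B → L) × (A → L), p ∈ C.concepts → c' ≠ p → g.1 ≤ p.1 →
        (⨅ m ∈ C.Mg g.1 Set.univ, m.1) ≤ p.1 := by
      intro p hp hnep hlep
      have hclosed : C.down (C.up p.1) = p.1 := by rw [hp.1, hp.2]
      have hlt : g < (⟨p.1, hclosed⟩ : {g : B → L // C.down (C.up g) = g}) :=
        Subtype.mk_lt_mk.mpr (lt_of_le_of_ne hlep
          (fun h => hnep (C.concept_ext hcc hp h)))
      refine le_trans ?_ (IH _ hlt)
      exact le_iInf₂ fun m hm => iInf₂_le m (hsub hlep m hm)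
    have hfin : (⨅ m ∈ C.Mg g.1 Set.univ, m.1) ≤ d.1 ⊓ e.1 :=
      le_inf (step d hd hned (heq.le.trans inf_le_left))
        (step e he hnee (heq.le.trans inf_le_right))
    rwa [← heq] at hfin

lemma extent_eq_iInf_Mg (hacc : C.ACC) {c : (B → L) × (A → L)} (hc : c ∈ C.concepts) :
    c.1 = ⨅ m ∈ C.Mg c.1 Set.univ, m.1 :=
  le_antisymm (le_iInf₂ fun _ hm => hm.2) (C.iInf_Mg_univ_le hacc hc)


lemma attr_bot (a : A) : (C.attrConcept a (⊥:L)).1 = fun _ => (⊤:L) := by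
  rw [C.attr_fst]; funext b; exact C.rimp_bot _ _

section Block

variable {Y : Set A} {X : Set B}

lemma supp_intent (hYX3 : ∀ a ∉ Y, ∀ b ∈ X, C.R a b = ⊥)
    (hz1 : ∀ a ∉ Y, ∀ b ∈ X, C.NoZeroDiv (C.sig a b))
    {c : (B → L) × (A → L)} (hc : c ∈ C.concepts) (hs : ∀ b ∉ X, c.1 b = ⊥)
    (hne : c.1 ≠ fun _ => ⊥) : ∀ a ∉ Y, c.2 a = ⊥ := by
  intro a ha
  have hex : ∃ b, c.1 b ≠ ⊥ := by
    by_contra h; push_neg at h; exact hne (funext h)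
  obtain ⟨b0, hb0⟩ := hex
  have hb0X : b0 ∈ X := by by_contra h; exact hb0 (hs b0 h)
  have h1 : c.2 a ≤ C.limp (C.sig a b0) (C.R a b0) (c.1 b0) := by
    rw [← hc.1]; exact iInf_le _ b0
  rw [hYX3 a ha b0 hb0X, C.limp_bot_left (hz1 a ha b0 hb0X) hb0] at h1
  exact le_bot_iff.mp h1

lemma mem_MF_Y (hYX3 : ∀ a ∉ Y, ∀ b ∈ X, C.R a b = ⊥)
    (hz1 : ∀ a ∉ Y, ∀ b ∈ X, C.NoZeroDiv (C.sig a b))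
    {m c : (B → L) × (A → L)} (hm : m ∈ C.MF Set.univ) (hle : c.1 ≤ m.1)
    (hs : ∀ b ∉ X, c.1 b = ⊥) (hne : c.1 ≠ fun _ => ⊥) : m ∈ C.MF Y := by
  obtain ⟨hirr, a, -, x, hmeq⟩ := hm
  refine ⟨hirr, a, ?_, x, hmeq⟩
  by_contra haY
  have hx : x ≠ ⊥ := by
    rintro rfl; exact hirr.2.1 (by rw [hmeq, C.attr_bot])
  apply hne
  funext b
  by_cases hbX : b ∈ X
  · have hmb : m.1 b = ⊥ := by
      rw [hmeq, C.attr_fst]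
      show C.rimp (C.sig a b) (C.R a b) x = ⊥
      rw [hYX3 a haY b hbX]
      exact C.rimp_bot_left (hz1 a haY b hbX) hx
    exact le_bot_iff.mp (hmb ▸ hle b)
  · exact hs b hbX

lemma Mg_univ_eq (hYX3 : ∀ a ∉ Y, ∀ b ∈ X, C.R a b = ⊥)
    (hz1 : ∀ a ∉ Y, ∀ b ∈ X, C.NoZeroDiv (C.sig a b))
    {c : (B → L) × (A → L)} (hs : ∀ b ∉ X, c.1 b = ⊥)
    (hne : c.1 ≠ fun _ => ⊥) : C.Mg c.1 Set.univ = C.Mg c.1 Y := by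
  ext m
  constructor
  · rintro ⟨hm, hle⟩
    exact ⟨C.mem_MF_Y hYX3 hz1 hm hle hs hne, hle⟩
  · rintro ⟨⟨hirr, a, -, x, hmeq⟩, hle⟩
    exact ⟨⟨hirr, a, Set.mem_univ a, x, hmeq⟩, hle⟩

lemma supported_mem_Kblock (hn : C.Normalized) (hacc : C.ACC)
    (hYX3 : ∀ a ∉ Y, ∀ b ∈ X, C.R a b = ⊥)
    (hz1 : ∀ a ∉ Y, ∀ b ∈ X, C.NoZeroDiv (C.sig a b))
    {c : (B → L) × (A → L)} (hc : c ∈ C.concepts)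
    (hs : ∀ b ∉ X, c.1 b = ⊥) : c ∈ C.Kblock Y := by
  by_cases hbot : c.1 = fun _ => (⊥:L)
  · have hcb : c = botC := C.concept_ext hc (C.botC_mem hn) hbot
    exact Set.mem_union_right _ (by rw [hcb]; exact Set.mem_insert_iff.mpr (Or.inr rfl))
  · refine Set.mem_union_left _ ⟨hc, ?_⟩
    rw [← C.Mg_univ_eq hYX3 hz1 hs hbot]
    exact C.extent_eq_iInf_Mg hacc hc

lemma supported_of_mem_Kblock (hn : C.Normalized)
    (hYX2 : ∀ a ∈ Y, ∀ b ∉ X, C.R a b = ⊥)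
    (hz2 : ∀ a ∈ Y, ∀ b ∉ X, C.NoZeroDiv (C.sig a b))
    {c : (B → L) × (A → L)} (hk : c ∈ C.Kblock Y) (ht : c ≠ topC) (hb : c ≠ botC) :
    ∀ b ∉ X, c.1 b = ⊥ := by
  rcases hk with hk | hk
  swap
  · rcases hk with h | h
    · exact absurd h ht
    · exact absurd h hb
  obtain ⟨hc, heq⟩ := hk
  by_cases hMg : (C.Mg c.1 Y).Nonempty
  · obtain ⟨m, hm⟩ := hMg
    obtain ⟨⟨hirr, a, haY, x, hmeq⟩, hle⟩ := id hm
    have hx : x ≠ ⊥ := by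
      rintro rfl; exact hirr.2.1 (by rw [hmeq, C.attr_bot])
    intro b hbX
    have hmb : m.1 b = ⊥ := by
      rw [hmeq, C.attr_fst]
      show C.rimp (C.sig a b) (C.R a b) x = ⊥
      rw [hYX2 a haY b hbX]
      exact C.rimp_bot_left (hz2 a haY b hbX) hx
    have h5 : c.1 ≤ m.1 := heq.le.trans (iInf₂_le m hm)
    exact le_bot_iff.mp (hmb ▸ h5 b)
  · exfalso
    apply ht
    refine C.concept_ext hc (C.topC_mem hn) ?_
    rw [heq, Set.not_nonempty_iff_eq_empty.mp hMg]
    simp only [Set.mem_empty_iff_false, not_false_eq_true, iInf_neg, iInf_top, topC]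
    rfl

end Block


lemma cmeet_mem {c d : (B → L) × (A → L)} (hc : c ∈ C.concepts)
    (hd : d ∈ C.concepts) : C.cmeet c d ∈ C.concepts := by
  refine ⟨rfl, ?_⟩
  show C.down (C.up (c.1 ⊓ d.1)) = c.1 ⊓ d.1
  have h : c.1 ⊓ d.1 = C.down (c.2 ⊔ d.2) := by rw [C.down_sup, hc.2, hd.2]
  rw [h, C.down_up_down]

lemma cjoin_mem {c d : (B → L) × (A → L)} (hc : c ∈ C.concepts)
    (hd : d ∈ C.concepts) : C.cjoin c d ∈ C.concepts := by
  refine ⟨?_, rfl⟩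
  show C.up (C.down (c.2 ⊓ d.2)) = c.2 ⊓ d.2
  have h : c.2 ⊓ d.2 = C.up (c.1 ⊔ d.1) := by rw [C.up_sup, hc.1, hd.1]
  rw [h, C.up_down_up]


end Aux

end FCAContext

/-- Let `(A,B,R,σ)` be a normalized context whose concept lattice
satisfies the ascending chain condition, with a decomposition into independent
subcontexts `{(Afam l, Bfam l)}`. Then for every `l`, the set
`K_l = {⟨g,f⟩ ∈ M : ⟨g,f⟩ = ⋀ M_g^{Afam l}} ∪ {⟨g_⊤,f_⊥⟩, ⟨g_⊥,f_⊤⟩}` is a complete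
block of the concept lattice. -/

theorem FCAContext.Kblock_is_complete_block
    {L I A B : Type*} [CompleteLattice L] [Finite I] [Nonempty I]
    [Nonempty A] [Nonempty B] (C : FCAContext L I A B)
    (hn : C.Normalized) (hacc : C.ACC)
    {Λ : Type*} (Afam : Λ → Set A) (Bfam : Λ → Set B)
    (hdec : C.SubcontextDecomposition Afam Bfam) :
    ∀ l, C.IsCompleteBlockM (C.Kblock (Afam l)) := by
  intro l
  classical
  set Y := Afam l with hY
  set X := Bfam l with hX
  obtain ⟨-, hsep, -, -, -, -, hz1', hz2'⟩ := hdec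
  have hsepl := hsep l
  obtain ⟨hYne, hXne, hYuniv, hXuniv, -, hYX2, hYX3⟩ := hsepl
  have hz1 : ∀ a ∉ Y, ∀ b ∈ X, C.NoZeroDiv (C.sig a b) := hz1' l
  have hz2 : ∀ a ∈ Y, ∀ b ∉ X, C.NoZeroDiv (C.sig a b) := hz2' l
  have hbt : (⊥ : L) ≠ ⊤ := C.bot_ne_top hn
  have topK : topC ∈ C.Kblock Y := Set.mem_union_right _ (Set.mem_insert _ _)
  have botK : botC ∈ C.Kblock Y :=
    Set.mem_union_right _ (Set.mem_insert_iff.mpr (Or.inr rfl))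
  have kcases : ∀ c ∈ C.Kblock Y, c = topC ∨ (c ∈ C.concepts ∧ ∀ b ∉ X, c.1 b = ⊥) := by
    intro c hkc
    by_cases ht : c = topC
    · exact Or.inl ht
    right
    have hcin : c ∈ C.concepts := by
      rcases hkc with hkc | hkc
      · exact hkc.1
      · rcases Set.mem_insert_iff.mp hkc with h | h
        · exact h ▸ C.topC_mem hn
        · exact (Set.mem_singleton_iff.mp h) ▸ C.botC_mem hn
    by_cases hb : c = botC
    · exact ⟨hcin, fun b _ => by rw [hb]; rfl⟩
    · exact ⟨hcin, C.supported_of_mem_Kblock hn hYX2 hz2 hkc ht hb⟩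
  have hKsub : C.Kblock Y ⊆ C.concepts := by
    intro c hkc
    rcases kcases c hkc with rfl | ⟨hcin, -⟩
    · exact C.topC_mem hn
    · exact hcin
  have memK : ∀ c ∈ C.concepts, (∀ b ∉ X, c.1 b = ⊥) → c ∈ C.Kblock Y :=
    fun c hc hs => C.supported_mem_Kblock hn hacc hYX3 hz1 hc hs
  have hattrT : ∀ (a : A) (b : B), (C.attrConcept a (⊤:L)).1 b = C.R a b := by
    intro a b
    rw [C.attr_fst]
    exact C.rimp_top _ _
  have hattr_ne : ∀ a : A, C.attrConcept a (⊤:L) ≠ topC ∧ C.attrConcept a (⊤:L) ≠ botC := by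
    intro a
    obtain ⟨b1, hb1⟩ := hn.1 a
    obtain ⟨b0, hb0⟩ := hn.2.1 a
    constructor
    · intro h
      have := hattrT a b0
      rw [h] at this
      exact hbt (hb0 ▸ this.symm)
    · intro h
      have := hattrT a b1
      rw [h] at this
      exact hb1 this.symm
  refine ⟨⟨hKsub, ?_, ?_, ?_, ?_⟩, topK, botK⟩
  · -- K ≠ concepts
    have hex : ∃ a, a ∉ Y := by
      by_contra h
      push_neg at h
      exact hYuniv (Set.eq_univ_iff_forall.mpr h)
    obtain ⟨a, haY⟩ := hex
    intro hKeq
    have hcK : C.attrConcept a ⊤ ∈ C.Kblock Y := hKeq ▸ C.attrConcept_mem a ⊤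
    obtain ⟨hct, hcb⟩ := hattr_ne a
    have hsup := C.supported_of_mem_Kblock hn hYX2 hz2 hcK hct hcb
    obtain ⟨b1, hb1⟩ := hn.1 a
    by_cases hbX : b1 ∈ X
    · exact hb1 (hYX3 a haY b1 hbX)
    · exact hb1 ((hattrT a b1).symm.trans (hsup b1 hbX))
  · -- nonempty K minus top bot
    obtain ⟨a, haY⟩ := hYne
    obtain ⟨hct, hcb⟩ := hattr_ne a
    refine ⟨C.attrConcept a ⊤, memK _ (C.attrConcept_mem a ⊤) ?_, ?_⟩
    · intro b hb
      rw [hattrT a b]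
      exact hYX2 a haY b hb
    · intro h
      rcases Set.mem_insert_iff.mp h with h | h
      · exact hct h
      · exact hcb (Set.mem_singleton_iff.mp h)
  · -- closure under cmeet and cjoin
    intro c hkc d hkd
    constructor
    · rcases kcases c hkc with rfl | ⟨hc, hsc⟩
      · have hd' : d ∈ C.concepts := hKsub hkd
        have heq : C.cmeet topC d = d := by
          have h1 : (topC : (B → L) × (A → L)).1 ⊓ d.1 = d.1 := by
            funext b; exact top_inf_eq _
          show ((topC : (B → L) × (A → L)).1 ⊓ d.1, C.up ((topC : (B → L) × (A → L)).1 ⊓ d.1)) = d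
          rw [h1, hd'.1]
        rw [heq]; exact hkd
      rcases kcases d hkd with rfl | ⟨hd, hsd⟩
      · have heq : C.cmeet c topC = c := by
          have h1 : c.1 ⊓ (topC : (B → L) × (A → L)).1 = c.1 := by
            funext b; exact inf_top_eq _
          show (c.1 ⊓ (topC : (B → L) × (A → L)).1, C.up (c.1 ⊓ (topC : (B → L) × (A → L)).1)) = c
          rw [h1, hc.1]
        rw [heq]; exact hkc
      · refine memK _ (C.cmeet_mem hc hd) fun b hb => ?_
        show c.1 b ⊓ d.1 b = ⊥
        rw [hsc b hb]
        exact bot_inf_eq _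
    · rcases kcases c hkc with rfl | ⟨hc, hsc⟩
      · have heq : C.cjoin topC d = topC := by
          have h1 : (topC : (B → L) × (A → L)).2 ⊓ d.2 = fun _ => (⊥:L) := by
            funext a; exact bot_inf_eq _
          show (C.down ((topC : (B → L) × (A → L)).2 ⊓ d.2), (topC : (B → L) × (A → L)).2 ⊓ d.2) = topC
          rw [h1, C.down_bot_fun]
          rfl
        rw [heq]; exact topK
      rcases kcases d hkd with rfl | ⟨hd, hsd⟩
      · have heq : C.cjoin c topC = topC := by
          have h1 : c.2 ⊓ (topC : (B → L) × (A → L)).2 = fun _ => (⊥:L) := by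
            funext a; exact inf_bot_eq _
          show (C.down (c.2 ⊓ (topC : (B → L) × (A → L)).2), c.2 ⊓ (topC : (B → L) × (A → L)).2) = topC
          rw [h1, C.down_bot_fun]
          rfl
        rw [heq]; exact topK
      by_cases hcb : c.1 = fun _ => (⊥:L)
      · have hcbot : c = botC := C.concept_ext hc (C.botC_mem hn) hcb
        subst hcbot
        have heq : C.cjoin botC d = d := by
          have h1 : (botC : (B → L) × (A → L)).2 ⊓ d.2 = d.2 := by
            funext a; exact top_inf_eq _
          show (C.down ((botC : (B → L) × (A → L)).2 ⊓ d.2), (botC : (B → L) × (A → L)).2 ⊓ d.2) = d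
          rw [h1, hd.2]
        rw [heq]; exact hkd
      by_cases hdb : d.1 = fun _ => (⊥:L)
      · have hdbot : d = botC := C.concept_ext hd (C.botC_mem hn) hdb
        subst hdbot
        have heq : C.cjoin c botC = c := by
          have h1 : c.2 ⊓ (botC : (B → L) × (A → L)).2 = c.2 := by
            funext a; exact inf_top_eq _
          show (C.down (c.2 ⊓ (botC : (B → L) × (A → L)).2), c.2 ⊓ (botC : (B → L) × (A → L)).2) = c
          rw [h1, hc.2]
        rw [heq]; exact hkc
      have hic := C.supp_intent hYX3 hz1 hc hsc hcb
      have hid := C.supp_intent hYX3 hz1 hd hsd hdb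
      by_cases hall : ∀ a ∈ Y, c.2 a ⊓ d.2 a = ⊥
      · have h1 : c.2 ⊓ d.2 = fun _ => (⊥:L) := by
          funext a
          by_cases ha : a ∈ Y
          · exact hall a ha
          · show c.2 a ⊓ d.2 a = ⊥
            rw [hic a ha]
            exact bot_inf_eq _
        have heq : C.cjoin c d = topC := by
          show (C.down (c.2 ⊓ d.2), c.2 ⊓ d.2) = topC
          rw [h1, C.down_bot_fun]
          rfl
        rw [heq]; exact topK
      · push_neg at hall
        obtain ⟨a0, ha0Y, ha0⟩ := hall
        refine memK _ (C.cjoin_mem hc hd) fun b hb => ?_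
        have h2 : (C.cjoin c d).1 b ≤ C.rimp (C.sig a0 b) (C.R a0 b) ((c.2 ⊓ d.2) a0) :=
          iInf_le _ a0
        simp only [Pi.inf_apply] at h2
        rw [hYX2 a0 ha0Y b hb, C.rimp_bot_left (hz2 a0 ha0Y b hb) ha0] at h2
        exact le_bot_iff.mp h2
  · -- comparability closure
    intro k hk c hc hcomp hcnot
    obtain ⟨hkK, hknot⟩ := hk
    have hkt : k ≠ topC := fun h => hknot (h ▸ Set.mem_insert _ _)
    have hkb : k ≠ botC := fun h => hknot (h ▸ Set.mem_insert_iff.mpr (Or.inr rfl))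
    have hct : c ≠ topC := fun h => hcnot (h ▸ Set.mem_insert _ _)
    have hcbne : c ≠ botC := fun h => hcnot (h ▸ Set.mem_insert_iff.mpr (Or.inr rfl))
    rcases kcases k hkK with h | ⟨hkc, hks⟩
    · exact absurd h hkt
    have hkb' : k.1 ≠ fun _ => (⊥:L) := fun h => hkb (C.concept_ext hkc (C.botC_mem hn) h)
    rcases hcomp with h | h
    · -- k ≤ c
      have h' : k.1 ≤ c.1 := h
      have hkint := C.supp_intent hYX3 hz1 hkc hks hkb'
      have hcle2 : c.2 ≤ k.2 := by
        rw [← hc.1, ← hkc.1]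
        exact C.up_antitone h'
      by_cases hex : ∃ a ∈ Y, c.2 a ≠ ⊥
      · obtain ⟨a0, ha0Y, ha0⟩ := hex
        refine memK _ hc fun b hb => ?_
        have h2 : c.1 b ≤ C.rimp (C.sig a0 b) (C.R a0 b) (c.2 a0) := by
          conv_lhs => rw [← hc.2]
          exact iInf_le _ a0
        rw [hYX2 a0 ha0Y b hb, C.rimp_bot_left (hz2 a0 ha0Y b hb) ha0] at h2
        exact le_bot_iff.mp h2
      · push_neg at hex
        exfalso
        apply hct
        have hint : c.2 = fun _ => (⊥:L) := by
          funext a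
          by_cases ha : a ∈ Y
          · exact hex a ha
          · exact le_bot_iff.mp ((hcle2 a).trans_eq (hkint a ha))
        refine C.concept_ext hc (C.topC_mem hn) ?_
        rw [← hc.2, hint, C.down_bot_fun]
        rfl
    · -- c ≤ k
      have h' : c.1 ≤ k.1 := h
      exact memK _ hc fun b hb => le_bot_iff.mp ((h' b).trans_eq (hks b hb))
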